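/- arXiv:2404.10898 — 3 statements merged into one kernel-verified Lean document; each statement's English description precedes it below -/
import Mathlib

section
/- For every θ with 0 ≤ θ < 1, the double integral over the positive quadrant of e^{-v₁-v₂} I₀(2√(θ v₁ v₂)) equals 1/(1−θ): ∫₀^∞∫₀^∞ e^{-v₁-v₂} I₀(2√(θ v₁ v₂)) dv₁ dv₂ = 1/(1−θ). -/
open MeasureTheory

/-- The modified Bessel function of order zero, `I₀(x) = ∑_{k=0}^∞ (x/2)^{2k}/(k!)²`. -/
noncomputable def besselI0 (x : ℝ) : ℝ :=
  ∑' k : ℕ, (x / 2) ^ (2 * k) / ((Nat.factorial k : ℝ)) ^ 2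

lemma integrableOn_exp_neg_pow (k : ℕ) :
    IntegrableOn (fun t : ℝ => Real.exp (-t) * t ^ k) (Set.Ioi 0) := by
  have h := Real.GammaIntegral_convergent (s := (k : ℝ) + 1) (by positivity)
  refine h.congr_fun (fun t ht => ?_) measurableSet_Ioi
  rw [add_sub_cancel_right]; simp only [Real.rpow_natCast]

lemma integral_exp_neg_pow (k : ℕ) :
    (∫ t in Set.Ioi (0:ℝ), Real.exp (-t) * t ^ k) = (Nat.factorial k : ℝ) := by
  have h := Real.Gamma_eq_integral (s := (k : ℝ) + 1) (by positivity)
  have h2 : Real.Gamma ((k : ℝ) + 1) = (Nat.factorial k : ℝ) :=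
    Real.Gamma_nat_eq_factorial k
  rw [h] at h2
  rw [← h2]
  refine setIntegral_congr_fun measurableSet_Ioi (fun t ht => ?_)
  rw [add_sub_cancel_right, Real.rpow_natCast]

lemma inner_integral (a : ℝ) (ha : 0 ≤ a) :
    (∫ t in Set.Ioi (0:ℝ), Real.exp (-t) * besselI0 (2 * Real.sqrt (a * t))) = Real.exp a := by
  have key : ∀ t ∈ Set.Ioi (0:ℝ),
      Real.exp (-t) * besselI0 (2 * Real.sqrt (a * t))
        = ∑' k : ℕ, (a ^ k / (Nat.factorial k : ℝ) ^ 2) * (Real.exp (-t) * t ^ k) := by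
    intro t ht
    have hat : 0 ≤ a * t := mul_nonneg ha (le_of_lt ht)
    have hb : besselI0 (2 * Real.sqrt (a * t))
        = ∑' k : ℕ, (a * t) ^ k / (Nat.factorial k : ℝ) ^ 2 := by
      unfold besselI0
      congr 1; funext k
      rw [mul_div_cancel_left₀ _ (two_ne_zero (α := ℝ)), pow_mul, Real.sq_sqrt hat]
    rw [hb, ← tsum_mul_left]
    congr 1; funext k
    rw [mul_pow]
    ring
    -- exp(-t) * ((a*t)^k / k!^2) = a^k/k!^2 * (exp(-t)*t^k)
  rw [setIntegral_congr_fun measurableSet_Ioi key]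
  rw [← MeasureTheory.integral_tsum_of_summable_integral_norm]
  · have : ∀ k : ℕ,
        (∫ t in Set.Ioi (0:ℝ), (a ^ k / (Nat.factorial k : ℝ) ^ 2) * (Real.exp (-t) * t ^ k))
          = a ^ k / (Nat.factorial k : ℝ) := by
      intro k
      rw [MeasureTheory.integral_const_mul, integral_exp_neg_pow]
      field_simp
    simp_rw [this]
    rw [Real.exp_eq_exp_ℝ, NormedSpace.exp_eq_tsum_div]
  · intro k
    exact ((integrableOn_exp_neg_pow k).const_mul _)
  · have : ∀ k : ℕ,
        (∫ t in Set.Ioi (0:ℝ), ‖(a ^ k / (Nat.factorial k : ℝ) ^ 2) * (Real.exp (-t) * t ^ k)‖)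
          = a ^ k / (Nat.factorial k : ℝ) := by
      intro k
      have : ∀ t ∈ Set.Ioi (0:ℝ),
          ‖(a ^ k / (Nat.factorial k : ℝ) ^ 2) * (Real.exp (-t) * t ^ k)‖
            = (a ^ k / (Nat.factorial k : ℝ) ^ 2) * (Real.exp (-t) * t ^ k) := by
        intro t ht
        rw [Real.norm_eq_abs, abs_of_nonneg]
        have h1 : (0:ℝ) ≤ a ^ k / (Nat.factorial k : ℝ) ^ 2 := by positivity
        have h2 : (0:ℝ) ≤ Real.exp (-t) * t ^ k := by
          have := le_of_lt (Set.mem_Ioi.mp ht); positivity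
        exact mul_nonneg h1 h2
      rw [setIntegral_congr_fun measurableSet_Ioi this,
        MeasureTheory.integral_const_mul, integral_exp_neg_pow]
      field_simp
    simp_rw [this]
    exact Real.summable_pow_div_factorial a

/-- For `0 ≤ θ < 1`,
`∫₀^∞∫₀^∞ e^{-v₁-v₂} I₀(2√(θ v₁ v₂)) dv₁ dv₂ = 1/(1−θ)`. -/
theorem integral_exp_besselI0 (θ : ℝ) (hθ0 : 0 ≤ θ) (hθ1 : θ < 1) :
    (∫ v₁ in Set.Ioi (0:ℝ), ∫ v₂ in Set.Ioi (0:ℝ),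
        Real.exp (-v₁ - v₂) * besselI0 (2 * Real.sqrt (θ * v₁ * v₂))) = 1 / (1 - θ) := by
  have step1 : ∀ v₁ ∈ Set.Ioi (0:ℝ),
      (∫ v₂ in Set.Ioi (0:ℝ), Real.exp (-v₁ - v₂) * besselI0 (2 * Real.sqrt (θ * v₁ * v₂)))
        = Real.exp (-(1 - θ) * v₁) := by
    intro v₁ hv₁
    have h1 : ∀ v₂, Real.exp (-v₁ - v₂) * besselI0 (2 * Real.sqrt (θ * v₁ * v₂))
        = Real.exp (-v₁) * (Real.exp (-v₂) * besselI0 (2 * Real.sqrt ((θ * v₁) * v₂))) := by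
      intro v₂
      rw [← mul_assoc, ← Real.exp_add]
      ring_nf
    simp_rw [h1]
    rw [MeasureTheory.integral_const_mul,
      inner_integral (θ * v₁) (mul_nonneg hθ0 (le_of_lt (Set.mem_Ioi.mp hv₁))), ← Real.exp_add]
    ring_nf
  rw [setIntegral_congr_fun measurableSet_Ioi step1]
  have hpos : 0 < 1 - θ := by linarith
  have h := Real.integral_rpow_mul_exp_neg_mul_Ioi (a := 1) (r := 1 - θ) one_pos hpos
  simp only [sub_self, Real.rpow_zero, one_mul, Real.rpow_one, Real.Gamma_one, mul_one] at h
  rw [← h]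
  refine setIntegral_congr_fun measurableSet_Ioi (fun t ht => ?_)
  rw [neg_mul]
end

section
/- For every θ with 0 ≤ θ < 1, the mass-weighted double integral over the positive quadrant satisfies ∫₀^∞∫₀^∞ (v₁ + v₂) e^{-v₁-v₂} I₀(2√(θ v₁ v₂)) dv₁ dv₂ = 2/(1−θ)². -/
open MeasureTheory

private lemma integrableOn_pow_exp (n : ℕ) :
    IntegrableOn (fun x : ℝ => x ^ n * Real.exp (-x)) (Set.Ioi 0) := by
  have h := Real.GammaIntegral_convergent (s := (n : ℝ) + 1) (by positivity)
  refine h.congr_fun (fun x hx => ?_) measurableSet_Ioi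
  dsimp only
  rw [add_sub_cancel_right, Real.rpow_natCast, mul_comm]

private lemma integral_pow_exp (n : ℕ) :
    ∫ x in Set.Ioi (0:ℝ), x ^ n * Real.exp (-x) = (Nat.factorial n : ℝ) := by
  have h := Real.Gamma_eq_integral (s := (n : ℝ) + 1) (by positivity)
  rw [Real.Gamma_nat_eq_factorial] at h
  rw [h]
  refine setIntegral_congr_fun measurableSet_Ioi (fun x hx => ?_)
  rw [add_sub_cancel_right, Real.rpow_natCast, mul_comm]

private lemma besselI0_sqrt {c : ℝ} (hc : 0 ≤ c) :
    besselI0 (2 * Real.sqrt c) = ∑' k : ℕ, c ^ k / ((Nat.factorial k : ℝ)) ^ 2 := by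
  unfold besselI0
  congr 1; funext k
  rw [mul_div_cancel_left₀ _ (two_ne_zero), pow_mul, Real.sq_sqrt hc]

/-- inner per-term function -/
private noncomputable def fk (θ v₁ : ℝ) (k : ℕ) (v₂ : ℝ) : ℝ :=
  Real.exp (-v₁) * θ ^ k * v₁ ^ k / ((Nat.factorial k : ℝ)) ^ 2 *
    (v₁ * (v₂ ^ k * Real.exp (-v₂)) + v₂ ^ (k + 1) * Real.exp (-v₂))

/-- outer per-term function -/
private noncomputable def G (θ : ℝ) (k : ℕ) (v₁ : ℝ) : ℝ :=
  θ ^ k / ((Nat.factorial k : ℝ)) ^ 2 *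
    ((Nat.factorial k : ℝ) * (v₁ ^ (k + 1) * Real.exp (-v₁))
      + (Nat.factorial (k + 1) : ℝ) * (v₁ ^ k * Real.exp (-v₁)))

private lemma integrable_fk (θ v₁ : ℝ) (k : ℕ) :
    Integrable (fk θ v₁ k) (volume.restrict (Set.Ioi 0)) := by
  have := (((integrableOn_pow_exp k).const_mul v₁).add (integrableOn_pow_exp (k + 1))).const_mul
    (Real.exp (-v₁) * θ ^ k * v₁ ^ k / ((Nat.factorial k : ℝ)) ^ 2)
  exact this

private lemma integral_fk (θ v₁ : ℝ) (k : ℕ) :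
    ∫ v₂ in Set.Ioi (0:ℝ), fk θ v₁ k v₂ = G θ k v₁ := by
  unfold fk G
  rw [integral_const_mul, integral_add (((integrableOn_pow_exp k).const_mul v₁))
      (integrableOn_pow_exp (k + 1)), integral_const_mul, integral_pow_exp, integral_pow_exp]
  have h1 : ((Nat.factorial k : ℝ)) ≠ 0 := Nat.cast_ne_zero.2 k.factorial_ne_zero
  field_simp
  ring

private lemma sumG {θ : ℝ} (v₁ : ℝ) (hθ : 0 ≤ θ) (hv : 0 ≤ v₁) :
    Summable (fun k : ℕ => G θ k v₁) := by
  have key : ∀ k : ℕ, G θ k v₁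
      = (θ * v₁) ^ k * (v₁ + ((k : ℝ) + 1)) / (Nat.factorial k : ℝ) * Real.exp (-v₁) := by
    intro k
    have h1 : ((Nat.factorial k : ℝ)) ≠ 0 := Nat.cast_ne_zero.2 k.factorial_ne_zero
    unfold G
    rw [Nat.factorial_succ]
    push_cast
    field_simp
    ring
  refine Summable.of_nonneg_of_le (fun k => ?_) (fun k => ?_)
    ((Real.summable_pow_div_factorial (2 * (θ * v₁))).mul_left ((v₁ + 1) * Real.exp (-v₁)))
  · rw [key k]; positivity
  · rw [key k, mul_pow 2]
    have h2k : (k : ℝ) + 1 ≤ 2 ^ k := by exact_mod_cast (Nat.lt_two_pow_self (n := k))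
    have h1k : (1 : ℝ) ≤ 2 ^ k := one_le_pow₀ one_le_two
    have hθv : (0:ℝ) ≤ (θ * v₁) ^ k := by positivity
    have he : (0:ℝ) < Real.exp (-v₁) := Real.exp_pos _
    have hfac : (0:ℝ) < (Nat.factorial k : ℝ) := by positivity
    have hnum : (θ * v₁) ^ k * (v₁ + ((k:ℝ) + 1)) * Real.exp (-v₁)
        ≤ (v₁ + 1) * Real.exp (-v₁) * (2 ^ k * (θ * v₁) ^ k) := by
      nlinarith [mul_le_mul_of_nonneg_left h2k hθv, mul_le_mul_of_nonneg_left h1k (mul_nonneg hθv hv)]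
    calc (θ * v₁) ^ k * (v₁ + ((k:ℝ) + 1)) / (Nat.factorial k : ℝ) * Real.exp (-v₁)
        = (θ * v₁) ^ k * (v₁ + ((k:ℝ) + 1)) * Real.exp (-v₁) / (Nat.factorial k : ℝ) := by ring
      _ ≤ (v₁ + 1) * Real.exp (-v₁) * (2 ^ k * (θ * v₁) ^ k) / (Nat.factorial k : ℝ) := by gcongr
      _ = (v₁ + 1) * Real.exp (-v₁) * (2 ^ k * (θ * v₁) ^ k / (Nat.factorial k : ℝ)) := by ring

private lemma inner_eq {θ : ℝ} (hθ : 0 ≤ θ) {v₁ : ℝ} (hv : 0 < v₁) :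
    (∫ v₂ in Set.Ioi (0:ℝ),
        (v₁ + v₂) * Real.exp (-v₁ - v₂) * besselI0 (2 * Real.sqrt (θ * v₁ * v₂)))
      = ∑' k : ℕ, G θ k v₁ := by
  have hpt : ∀ v₂ ∈ Set.Ioi (0:ℝ),
      (v₁ + v₂) * Real.exp (-v₁ - v₂) * besselI0 (2 * Real.sqrt (θ * v₁ * v₂))
        = ∑' k : ℕ, fk θ v₁ k v₂ := by
    intro v₂ hv₂
    rw [besselI0_sqrt (mul_nonneg (mul_nonneg hθ hv.le) (le_of_lt hv₂)), ← tsum_mul_left]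
    congr 1; funext k
    unfold fk
    rw [show -v₁ - v₂ = -v₁ + -v₂ by ring, Real.exp_add, mul_pow, mul_pow]
    ring
  rw [setIntegral_congr_fun measurableSet_Ioi hpt]
  rw [← integral_tsum_of_summable_integral_norm (fun k => integrable_fk θ v₁ k) ?_]
  · exact tsum_congr fun k => integral_fk θ v₁ k
  · have : ∀ k : ℕ, (∫ v₂ in Set.Ioi (0:ℝ), ‖fk θ v₁ k v₂‖) = G θ k v₁ := by
      intro k
      rw [← integral_fk θ v₁ k]
      refine setIntegral_congr_fun measurableSet_Ioi (fun v₂ hv₂ => ?_)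
      rw [Real.norm_eq_abs, abs_of_nonneg]
      unfold fk
      have h1 : (0:ℝ) < v₂ := hv₂
      exact mul_nonneg (div_nonneg (mul_nonneg (mul_nonneg (Real.exp_pos _).le
          (pow_nonneg hθ k)) (pow_nonneg hv.le k)) (by positivity))
        (add_nonneg (mul_nonneg hv.le (mul_nonneg (pow_nonneg h1.le k) (Real.exp_pos _).le))
          (mul_nonneg (pow_nonneg h1.le _) (Real.exp_pos _).le))
    simpa only [this] using sumG v₁ hθ hv.le

/-- For `0 ≤ θ < 1`,
`∫₀^∞∫₀^∞ (v₁+v₂) e^{-v₁-v₂} I₀(2√(θ v₁ v₂)) dv₁ dv₂ = 2/(1−θ)²`. -/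
theorem integral_mass_exp_besselI0 (θ : ℝ) (hθ0 : 0 ≤ θ) (hθ1 : θ < 1) :
    (∫ v₁ in Set.Ioi (0:ℝ), ∫ v₂ in Set.Ioi (0:ℝ),
        (v₁ + v₂) * Real.exp (-v₁ - v₂) * besselI0 (2 * Real.sqrt (θ * v₁ * v₂)))
      = 2 / (1 - θ) ^ 2 := by
  have hθ' : ‖θ‖ < 1 := by rw [Real.norm_eq_abs, abs_of_nonneg hθ0]; exact hθ1
  have hfac : ∀ k : ℕ, ((Nat.factorial k : ℝ)) ≠ 0 := fun k => Nat.cast_ne_zero.2 k.factorial_ne_zero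
  have hG_int : ∀ k : ℕ, Integrable (fun v₁ => G θ k v₁) (volume.restrict (Set.Ioi 0)) := by
    intro k
    exact (((integrableOn_pow_exp (k + 1)).const_mul (Nat.factorial k : ℝ)).add
      ((integrableOn_pow_exp k).const_mul (Nat.factorial (k + 1) : ℝ))).const_mul
      (θ ^ k / ((Nat.factorial k : ℝ)) ^ 2)
  have hG_val : ∀ k : ℕ, (∫ v₁ in Set.Ioi (0:ℝ), G θ k v₁) = 2 * ((k : ℝ) + 1) * θ ^ k := by
    intro k
    unfold G
    rw [integral_const_mul, integral_add (((integrableOn_pow_exp (k+1)).const_mul _))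
      ((integrableOn_pow_exp k).const_mul _), integral_const_mul, integral_const_mul,
      integral_pow_exp, integral_pow_exp, Nat.factorial_succ]
    field_simp
    push_cast
    ring
  have hsum : Summable (fun k : ℕ => 2 * ((k : ℝ) + 1) * θ ^ k) := by
    have h1 : Summable (fun k : ℕ => (k : ℝ) * θ ^ k) :=
      summable_pow_mul_geometric_of_norm_lt_one 1 hθ' |>.congr (by intro k; simp)
    have h2 : Summable (fun k : ℕ => θ ^ k) := summable_geometric_of_lt_one hθ0 hθ1
    have := (h1.add h2).mul_left 2
    exact this.congr (by intro k; push_cast; ring)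
  have hpt : ∀ v₁ ∈ Set.Ioi (0:ℝ),
      (∫ v₂ in Set.Ioi (0:ℝ),
        (v₁ + v₂) * Real.exp (-v₁ - v₂) * besselI0 (2 * Real.sqrt (θ * v₁ * v₂)))
        = ∑' k : ℕ, G θ k v₁ := fun v₁ hv₁ => inner_eq hθ0 hv₁
  rw [setIntegral_congr_fun measurableSet_Ioi hpt]
  rw [← integral_tsum_of_summable_integral_norm hG_int ?_]
  · rw [tsum_congr hG_val]
    have h1 : ∑' k : ℕ, (k : ℝ) * θ ^ k = θ / (1 - θ) ^ 2 :=
      tsum_coe_mul_geometric_of_norm_lt_one hθ'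
    have h2 : ∑' k : ℕ, θ ^ k = (1 - θ)⁻¹ := tsum_geometric_of_lt_one hθ0 hθ1
    have hsum1 : Summable (fun k : ℕ => (k : ℝ) * θ ^ k) :=
      summable_pow_mul_geometric_of_norm_lt_one 1 hθ' |>.congr (by intro k; simp)
    have hsum2 : Summable (fun k : ℕ => θ ^ k) := summable_geometric_of_lt_one hθ0 hθ1
    calc ∑' k : ℕ, 2 * ((k : ℝ) + 1) * θ ^ k
        = 2 * ∑' k : ℕ, ((k : ℝ) * θ ^ k + θ ^ k) := by
          rw [← tsum_mul_left]; exact tsum_congr (by intro k; ring)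
      _ = 2 * (θ / (1 - θ) ^ 2 + (1 - θ)⁻¹) := by rw [hsum1.tsum_add hsum2, h1, h2]
      _ = 2 / (1 - θ) ^ 2 := by
          have h3 : (1 : ℝ) - θ ≠ 0 := by intro h; nlinarith
          field_simp
          ring
  · have hval : ∀ k : ℕ, (∫ v₁ in Set.Ioi (0:ℝ), ‖G θ k v₁‖) = 2 * ((k : ℝ) + 1) * θ ^ k := by
      intro k
      rw [← hG_val k]
      refine setIntegral_congr_fun measurableSet_Ioi (fun v₁ hv₁ => ?_)
      rw [Real.norm_eq_abs, abs_of_nonneg]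
      unfold G
      have h1 : (0:ℝ) < v₁ := hv₁
      exact mul_nonneg (div_nonneg (pow_nonneg hθ0 k) (by positivity))
        (add_nonneg (mul_nonneg (Nat.cast_nonneg _) (mul_nonneg (pow_nonneg h1.le _)
          (Real.exp_pos _).le)) (mul_nonneg (Nat.cast_nonneg _)
          (mul_nonneg (pow_nonneg h1.le _) (Real.exp_pos _).le)))
    simpa only [hval] using hsum
end

section
/- For the exact constant-kernel solution with a = b = 1, the total density of particles per unit volume equals 2/(2+t): for every t ≥ 0, N(t) := ∫₀^∞∫₀^∞ n(v₁,v₂,t) dv₁ dv₂ = 2/(2+t), where n(v₁,v₂,t) = (e^{-v₁-v₂}/(1+t/2)²)·I₀(2√(v₁ v₂ t/(t+2))). -/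
open MeasureTheory Real Set

/-- The exact constant-kernel solution with `a = b = 1`. -/
noncomputable def exactSol₁ (v₁ v₂ t : ℝ) : ℝ :=
  (Real.exp (-v₁ - v₂) / (1 + t / 2) ^ 2) *
    besselI0 (2 * Real.sqrt (v₁ * v₂ * t / (t + 2)))

lemma intPowExp (k : ℕ) : ∫ v in Ioi (0:ℝ), Real.exp (-v) * v ^ k = (Nat.factorial k : ℝ) := by
  have h : (0:ℝ) < (k:ℝ) + 1 := by positivity
  have := Real.Gamma_eq_integral h
  rw [Real.Gamma_nat_eq_factorial] at this
  rw [this]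
  refine setIntegral_congr_fun measurableSet_Ioi (fun x hx => ?_)
  rw [show (k:ℝ) + 1 - 1 = (k:ℝ) by ring, Real.rpow_natCast]

lemma intblPowExp (k : ℕ) : IntegrableOn (fun v => Real.exp (-v) * v ^ k) (Ioi (0:ℝ)) := by
  have h : (0:ℝ) < (k:ℝ) + 1 := by positivity
  have := Real.GammaIntegral_convergent h
  refine this.congr_fun (fun x hx => ?_) measurableSet_Ioi
  rw [show (k:ℝ) + 1 - 1 = (k:ℝ) by ring]; simp only [Real.rpow_natCast]

lemma exp_eq_tsum' (a : ℝ) : Real.exp a = ∑' k : ℕ, a ^ k / (Nat.factorial k : ℝ) := by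
  rw [Real.exp_eq_exp_ℝ, NormedSpace.exp_eq_tsum_div]

lemma besselI0_two_sqrt (x : ℝ) (hx : 0 ≤ x) :
    besselI0 (2 * Real.sqrt x) = ∑' k : ℕ, x ^ k / (Nat.factorial k : ℝ) ^ 2 := by
  unfold besselI0
  refine tsum_congr fun k => ?_
  rw [show 2 * Real.sqrt x / 2 = Real.sqrt x by ring, pow_mul, Real.sq_sqrt hx]

lemma core (a : ℝ) (ha : 0 ≤ a) :
    (∫ v in Ioi (0:ℝ), Real.exp (-v) * ∑' k : ℕ, a ^ k * v ^ k / (Nat.factorial k : ℝ) ^ 2)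
      = Real.exp a := by
  have hfac : ∀ k : ℕ, (Nat.factorial k : ℝ) ≠ 0 :=
    fun k => Nat.cast_ne_zero.2 (Nat.factorial_ne_zero k)
  have h1 : ∀ v : ℝ, Real.exp (-v) * ∑' k : ℕ, a ^ k * v ^ k / (Nat.factorial k : ℝ) ^ 2
      = ∑' k : ℕ, (a ^ k / (Nat.factorial k : ℝ) ^ 2) * (Real.exp (-v) * v ^ k) := by
    intro v
    rw [← tsum_mul_left]
    exact tsum_congr fun k => by ring
  simp_rw [h1]
  rw [← integral_tsum_of_summable_integral_norm]
  · rw [exp_eq_tsum']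
    refine tsum_congr fun k => ?_
    rw [integral_const_mul, intPowExp]
    field_simp
  · exact fun k => ((intblPowExp k).const_mul _)
  · have heq : ∀ k : ℕ,
        (∫ v in Ioi (0:ℝ), ‖(a ^ k / (Nat.factorial k : ℝ) ^ 2) * (Real.exp (-v) * v ^ k)‖)
          = a ^ k / (Nat.factorial k : ℝ) := by
      intro k
      have : ∀ v ∈ Ioi (0:ℝ),
          ‖(a ^ k / (Nat.factorial k : ℝ) ^ 2) * (Real.exp (-v) * v ^ k)‖
            = (a ^ k / (Nat.factorial k : ℝ) ^ 2) * (Real.exp (-v) * v ^ k) := by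
        intro v hv
        have hv' : (0:ℝ) < v := hv
        rw [Real.norm_of_nonneg]
        positivity
      rw [setIntegral_congr_fun measurableSet_Ioi this, integral_const_mul, intPowExp]
      field_simp
    simp_rw [heq]
    exact Real.summable_pow_div_factorial a

lemma inner_int (t : ℝ) (ht : 0 ≤ t) (v₁ : ℝ) (hv₁ : 0 ≤ v₁) :
    (∫ v₂ in Ioi (0:ℝ), exactSol₁ v₁ v₂ t)
      = (4 / (t + 2) ^ 2) * Real.exp (-(2 / (t + 2)) * v₁) := by
  have ht2 : (0:ℝ) < t + 2 := by linarith
  have hstep : ∀ v₂ ∈ Ioi (0:ℝ), exactSol₁ v₁ v₂ t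
      = (Real.exp (-v₁) / (1 + t / 2) ^ 2) *
        (Real.exp (-v₂) *
          ∑' k : ℕ, (v₁ * (t / (t + 2))) ^ k * v₂ ^ k / (Nat.factorial k : ℝ) ^ 2) := by
    intro v₂ hv₂
    have hv₂' : (0:ℝ) ≤ v₂ := le_of_lt hv₂
    have hx : (0:ℝ) ≤ v₁ * v₂ * t / (t + 2) := by positivity
    unfold exactSol₁
    rw [besselI0_two_sqrt _ hx]
    have hts : ∀ k : ℕ, (v₁ * v₂ * t / (t + 2)) ^ k / (Nat.factorial k : ℝ) ^ 2
        = (v₁ * (t / (t + 2))) ^ k * v₂ ^ k / (Nat.factorial k : ℝ) ^ 2 := by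
      intro k
      rw [← mul_pow]
      congr 2
      ring
    rw [tsum_congr hts, show -v₁ - v₂ = -v₁ + -v₂ by ring, Real.exp_add]
    ring
  rw [setIntegral_congr_fun measurableSet_Ioi hstep, integral_const_mul,
    core (v₁ * (t / (t + 2))) (by positivity)]
  have hxp : Real.exp (-v₁) * Real.exp (v₁ * (t / (t + 2)))
      = Real.exp (-(2 / (t + 2)) * v₁) := by
    rw [← Real.exp_add]
    congr 1
    field_simp
    ring
  rw [div_mul_eq_mul_div, hxp]
  field_simp
  ring

lemma integral_exp_neg_mul (b : ℝ) (hb : 0 < b) :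
    (∫ v in Ioi (0:ℝ), Real.exp (-b * v)) = b⁻¹ := by
  have h := integral_exp_neg_mul_rpow (p := 1) (b := b) one_pos hb
  simp_rw [Real.rpow_one] at h
  rw [h]
  norm_num [Real.Gamma_two, Real.rpow_neg_one]

/-- The total density of particles per unit volume for the exact constant-kernel
solution with `a = b = 1` equals `2/(2+t)`. -/
theorem total_density_exactSol (t : ℝ) (ht : 0 ≤ t) :
    (∫ v₁ in Set.Ioi (0:ℝ), ∫ v₂ in Set.Ioi (0:ℝ), exactSol₁ v₁ v₂ t) = 2 / (2 + t) := by
  have ht2 : (0:ℝ) < t + 2 := by linarith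
  rw [setIntegral_congr_fun measurableSet_Ioi
    (fun v₁ hv₁ => inner_int t ht v₁ (le_of_lt hv₁)),
    integral_const_mul, integral_exp_neg_mul _ (by positivity)]
  field_simp
  ring
end
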